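/- arXiv:0707.4436 — 2 statements merged into one kernel-verified Lean document; each statement's English description precedes it below -/
import Mathlib

section
/- Let p be a prime, let g : ℤ_p → [0,1] be any function, let a_1, …, a_k be k distinguished non-zero elements of ℤ_p, and let E ≥ 0 be an integer. Then at least one of the following two conclusions holds. (Vanishing generalized balanced function) There exists a function h : ℤ_p → [-1,1] such that h(n) ≥ 0 for every n in the support of g, h(n) ≤ 0 for every n outside the support of g, Σ_n h(n) = 0, the ℓ¹-norm Σ_n |h(n)| is at least E, and the Fourier transform ĥ vanishes at a_1, a_2, …, a_k. (Generalized balanced function with small spectral support) Or there exists a function h : ℤ_p → ℝ whose Fourier transform ĥ is supported inside the set {0} ∪ {a_1,…,a_k} ∪ {−a_1,…,−a_k}, and such that, apart from at most (2k+2)·E exceptional elements n of ℤ_p, one has h(n) > 0 whenever n lies in the support of g and h(n) < 0 whenever n lies outside the support of g. -/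
open Finset

/-- The Fourier transform on `ZMod p`: `f̂(a) = ∑_n f(n) ω^{an}` with `ω = e^{2πi/p}`. -/
noncomputable def zmodFourier {p : ℕ} [NeZero p] (f : ZMod p → ℂ) (a : ZMod p) : ℂ :=
  ∑ n : ZMod p, f n * Complex.exp (2 * Real.pi * Complex.I * ((a * n).val : ℂ) / (p : ℂ))

/-!
Put `w n = ±(1, (e(a_i n / p))_i) ∈ ℝ × ℂ^k ≅ ℝ^(2k+1)`, the sign recording whether `n` lies
in the support of `g`. As long as `0` is in the convex hull of the `w n` not used so far,
Carathéodory writes it as a convex combination of at most `2k+2` of them; after `E` rounds the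
accumulated weights `t ∈ [0,1]` have mass `E` and `∑ t n w n = 0`, so `h = ±t` is a vanishing
balanced function. If some round fails, Hahn–Banach gives a functional `φ` positive on every
unused `w n`, and `h n = φ(1, (e(a_i n / p))_i)`, a real combination of the characters
`1, e(±a_i n / p)`, has the required signs outside the at most `(2k+2)E` used points.
-/

section ConvexAlternative

variable {ι F : Type*} [Fintype ι] [NormedAddCommGroup F] [NormedSpace ℝ F]

structure IsVanishingWeight (w : ι → F) (U : Finset ι) (e : ℝ) (t : ι → ℝ) : Prop where
  mem_Icc : ∀ n, t n ∈ Set.Icc (0 : ℝ) 1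
  eq_zero_of_notMem : ∀ n ∉ U, t n = 0
  sum_eq : ∑ n, t n = e
  sum_smul_eq_zero : ∑ n, t n • w n = 0

theorem IsVanishingWeight.add [DecidableEq ι] {w : ι → F} {U T : Finset ι} {e e' : ℝ}
    {t t' : ι → ℝ} (h : IsVanishingWeight w U e t) (h' : IsVanishingWeight w T e' t')
    (hUT : Disjoint U T) : IsVanishingWeight w (U ∪ T) (e + e') (t + t') where
  mem_Icc n := by
    by_cases hn : n ∈ U
    · simpa [h'.eq_zero_of_notMem n (disjoint_left.1 hUT hn)] using h.mem_Icc n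
    · simpa [h.eq_zero_of_notMem n hn] using h'.mem_Icc n
  eq_zero_of_notMem n hn := by
    rw [mem_union, not_or] at hn
    simp [h.eq_zero_of_notMem n hn.1, h'.eq_zero_of_notMem n hn.2]
  sum_eq := by simp [sum_add_distrib, h.sum_eq, h'.sum_eq]
  sum_smul_eq_zero := by
    simp [add_smul, sum_add_distrib, h.sum_smul_eq_zero, h'.sum_smul_eq_zero]

theorem exists_forall_pos_of_zero_notMem_convexHull (w : ι → F) (s : Set ι)
    (h : (0 : F) ∉ convexHull ℝ (w '' s)) :
    ∃ φ : StrongDual ℝ F, ∀ n ∈ s, 0 < φ (w n) := by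
  obtain ⟨φ, u, hu, hφ⟩ := geometric_hahn_banach_point_closed (convex_convexHull ℝ _)
    ((s.toFinite.image w).isCompact_convexHull ℝ).isClosed h
  rw [map_zero] at hu
  exact ⟨φ, fun n hn => hu.trans (hφ _ (subset_convexHull ℝ _ ⟨n, hn, rfl⟩))⟩

theorem exists_isVanishingWeight_of_zero_mem_convexHull [FiniteDimensional ℝ F] (w : ι → F)
    (s : Set ι) (h : (0 : F) ∈ convexHull ℝ (w '' s)) :
    ∃ T : Finset ι, ↑T ⊆ s ∧ T.card ≤ Module.finrank ℝ F + 1 ∧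
      ∃ t, IsVanishingWeight w T 1 t := by
  classical
  obtain ⟨κ, _, z, W, hzs, hz, hW, hW1, hWz⟩ := eq_pos_convex_span_of_mem_convexHull h
  choose σ hσs hσw using fun y => hzs (Set.mem_range_self y)
  have hσ : Function.Injective σ := fun y y' hyy' => hz.injective (by rw [← hσw, ← hσw, hyy'])
  set t : ι → ℝ := Function.extend σ W 0
  have ht_off : ∀ n ∉ Set.range σ, t n = 0 := fun n hn =>
    Function.extend_apply' _ _ _ (by simpa using hn)
  have ht_on : ∀ y, t (σ y) = W y := hσ.extend_apply W 0
  refine ⟨univ.image σ, by simpa [Set.range_subset_iff] using hσs, ?_, t, ?_, ?_, ?_, ?_⟩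
  · calc (univ.image σ).card ≤ Fintype.card κ := card_image_le
      _ ≤ Module.finrank ℝ (vectorSpan ℝ (Set.range z)) + 1 := hz.card_le_finrank_succ
      _ ≤ Module.finrank ℝ F + 1 := by grw [Submodule.finrank_le]
  · have hW_le : ∀ y, W y ≤ 1 := fun y =>
      hW1 ▸ single_le_sum (fun y _ => (hW y).le) (mem_univ y)
    intro n
    by_cases hn : n ∈ Set.range σ
    · obtain ⟨y, rfl⟩ := hn
      exact ht_on y ▸ ⟨(hW y).le, hW_le y⟩
    · simp [ht_off n hn]
  · intro n hn
    exact ht_off n (by simpa using hn)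
  · rw [← hW1]
    exact (Fintype.sum_of_injective σ hσ W t ht_off (fun y => (ht_on y).symm)).symm
  · rw [← hWz]
    refine (Fintype.sum_of_injective σ hσ _ _ (fun n hn => by simp [ht_off n hn]) ?_).symm
    simp [ht_on, hσw]

theorem exists_isVanishingWeight_or_forall_pos [FiniteDimensional ℝ F] (w : ι → F) (e : ℕ) :
    (∃ U t, U.card ≤ (Module.finrank ℝ F + 1) * e ∧ IsVanishingWeight w U e t) ∨
      ∃ (φ : StrongDual ℝ F) (Ex : Finset ι),
        Ex.card ≤ (Module.finrank ℝ F + 1) * e ∧ ∀ n ∉ Ex, 0 < φ (w n) := by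
  classical
  induction e with
  | zero => exact .inl ⟨∅, 0, by simp, ⟨fun _ => by simp, fun _ _ => rfl, by simp, by simp⟩⟩
  | succ e ih =>
    have hmono : (Module.finrank ℝ F + 1) * e ≤ (Module.finrank ℝ F + 1) * (e + 1) := by
      gcongr; omega
    rcases ih with ⟨U, t, hU, ht⟩ | ⟨φ, Ex, hEx, hφ⟩
    · by_cases h0 : (0 : F) ∈ convexHull ℝ (w '' (↑U)ᶜ)
      · obtain ⟨T, hTU, hT, t', ht'⟩ :=
          exists_isVanishingWeight_of_zero_mem_convexHull w _ h0
        have hdisj : Disjoint U T := by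
          rw [← disjoint_coe]; exact disjoint_compl_right.mono_right hTU
        refine .inl ⟨U ∪ T, t + t', ?_, by exact_mod_cast ht.add ht' hdisj⟩
        calc (U ∪ T).card ≤ U.card + T.card := card_union_le U T
          _ ≤ (Module.finrank ℝ F + 1) * (e + 1) := by rw [mul_add_one]; omega
      · obtain ⟨φ, hφ⟩ := exists_forall_pos_of_zero_notMem_convexHull w _ h0
        exact .inr ⟨φ, U, hU.trans hmono, fun n hn => hφ n hn⟩
    · exact .inr ⟨φ, Ex, hEx.trans hmono, hφ⟩

end ConvexAlternative

theorem sum_ofReal_map_mul {ι F : Type*} [Fintype ι] [AddCommGroup F] [Module ℝ F]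
    (φ : F →ₗ[ℝ] ℝ) (x : ι → F) (z : ι → ℂ) :
    ∑ n, (φ (x n) : ℂ) * z n =
      φ (∑ n, (z n).re • x n) + φ (∑ n, (z n).im • x n) * Complex.I := by
  apply Complex.ext <;> simp [Complex.re_sum, Complex.im_sum, map_sum, mul_comm]

section Fourier

variable {p : ℕ} [NeZero p]

open ZMod

theorem zmodFourier_eq_sum_stdAddChar (f : ZMod p → ℂ) (b : ZMod p) :
    zmodFourier f b = ∑ n, f n * stdAddChar (b * n) := by
  simp [zmodFourier, stdAddChar_apply, toCircle_apply]

theorem zmodFourier_zero (f : ZMod p → ℂ) : zmodFourier f 0 = ∑ n, f n := by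
  simp [zmodFourier_eq_sum_stdAddChar]

theorem zmodFourier_stdAddChar_eq_zero {b c : ZMod p} (h : b + c ≠ 0) :
    zmodFourier (fun n => stdAddChar (b * n)) c = 0 := by
  classical
  simp_rw [zmodFourier_eq_sum_stdAddChar, ← AddChar.map_add_eq_mul, ← add_mul,
    mul_comm _ (_ : ZMod p)]
  rw [AddChar.sum_mulShift _ (isPrimitive_stdAddChar p), if_neg h, Nat.cast_zero]

theorem zmodFourier_conj_stdAddChar (b c : ZMod p) :
    zmodFourier (fun n => starRingEnd ℂ (stdAddChar (b * n))) c =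
      zmodFourier (fun n => stdAddChar (-b * n)) c := by
  simp [neg_mul, AddChar.map_neg_eq_conj]

theorem zmodFourier_ofReal_re_im_eq_zero {z : ZMod p → ℂ} {c : ZMod p}
    (h : zmodFourier z c = 0) (hconj : zmodFourier (fun n => starRingEnd ℂ (z n)) c = 0) :
    zmodFourier (fun n => ((z n).re : ℂ)) c = 0 ∧
      zmodFourier (fun n => ((z n).im : ℂ)) c = 0 := by
  rw [zmodFourier] at h hconj
  simp only [zmodFourier, Complex.re_eq_add_conj, Complex.im_eq_sub_conj, div_mul_eq_mul_div,
    ← sum_div, add_mul, sub_mul, sum_add_distrib, sum_sub_distrib, h, hconj]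
  simp

end Fourier

theorem finrank_real_prod_fin_complex (k : ℕ) :
    Module.finrank ℝ (ℝ × (Fin k → ℂ)) = 2 * k + 1 := by
  simp [Module.finrank_prod, Module.finrank_pi_fintype, Complex.finrank_real_complex, mul_comm,
    add_comm]

section CharVec

open ZMod

variable {p : ℕ} [NeZero p] {k : ℕ} (a : Fin k → ZMod p)

noncomputable def charVec (n : ZMod p) : ℝ × (Fin k → ℂ) :=
  (1, fun i => stdAddChar (a i * n))

theorem sum_smul_charVec_eq_zero_iff (c : ZMod p → ℝ) :
    ∑ n, c n • charVec a n = 0 ↔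
      ∑ n, c n = 0 ∧ ∀ i, zmodFourier (fun n => (c n : ℂ)) (a i) = 0 := by
  simp [charVec, Prod.ext_iff, Prod.fst_sum, Prod.snd_sum, funext_iff, Finset.sum_apply,
    zmodFourier_eq_sum_stdAddChar, Complex.real_smul]

variable {a} in
theorem zmodFourier_map_charVec_eq_zero (φ : (ℝ × (Fin k → ℂ)) →ₗ[ℝ] ℝ) {b : ZMod p}
    (hb : b ≠ 0) (hba : ∀ i, b ≠ a i ∧ b ≠ -a i) :
    zmodFourier (fun n => (φ (charVec a n) : ℂ)) b = 0 := by
  -- `Re e(bn/p)` and `Im e(bn/p)` are orthogonal to `1` and to every `e(a_i n/p)`.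
  have hvanish : ∀ c, b + c ≠ 0 → -b + c ≠ 0 →
      zmodFourier (fun n => ((stdAddChar (b * n)).re : ℂ)) c = 0 ∧
        zmodFourier (fun n => ((stdAddChar (b * n)).im : ℂ)) c = 0 := fun c h h' =>
    zmodFourier_ofReal_re_im_eq_zero (zmodFourier_stdAddChar_eq_zero h)
      ((zmodFourier_conj_stdAddChar b c).trans (zmodFourier_stdAddChar_eq_zero h'))
  have hzero : ∀ x : ZMod p → ℝ, (∀ c, b + c ≠ 0 → -b + c ≠ 0 →
      zmodFourier (fun n => (x n : ℂ)) c = 0) → ∑ n, x n • charVec a n = 0 := by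
    intro x hx
    refine (sum_smul_charVec_eq_zero_iff a x).2 ⟨?_, fun i => hx _ ?_ ?_⟩
    · have := hx 0 (by simpa using hb) (by simpa using hb)
      exact_mod_cast (zmodFourier_zero _).symm.trans this
    · exact fun h => (hba i).2 (eq_neg_of_add_eq_zero_left h)
    · exact fun h => (hba i).1 (by linear_combination -h)
  rw [zmodFourier_eq_sum_stdAddChar, sum_ofReal_map_mul,
    hzero _ fun c h h' => (hvanish c h h').1, hzero _ fun c h h' => (hvanish c h h').2]
  simp

end CharVec

noncomputable def supportSign {α : Type*} (g : α → ℝ) (n : α) : ℝ :=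
  if g n = 0 then -1 else 1

section Balanced

variable {p : ℕ} [NeZero p] {k : ℕ} {a : Fin k → ZMod p} {g : ZMod p → ℝ}

theorem exists_balanced_of_isVanishingWeight {U : Finset (ZMod p)} {E : ℕ} {t : ZMod p → ℝ}
    (ht : IsVanishingWeight (fun n => supportSign g n • charVec a n) U E t) :
    ∃ h : ZMod p → ℝ,
      (∀ n, h n ∈ Set.Icc (-1 : ℝ) 1) ∧
      (∀ n, g n ≠ 0 → 0 ≤ h n) ∧
      (∀ n, g n = 0 → h n ≤ 0) ∧
      (∑ n : ZMod p, h n = 0) ∧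
      ((E : ℝ) ≤ ∑ n : ZMod p, |h n|) ∧
      (∀ i : Fin k, zmodFourier (fun n => (h n : ℂ)) (a i) = 0) := by
  have hsum := ht.sum_smul_eq_zero
  simp_rw [smul_smul] at hsum
  obtain ⟨hsum, hfourier⟩ := (sum_smul_charVec_eq_zero_iff a _).1 hsum
  have habs : ∀ n, |t n * supportSign g n| = t n := fun n => by
    by_cases hn : g n = 0 <;> simp [supportSign, hn, (ht.mem_Icc n).1]
  refine ⟨fun n => t n * supportSign g n, fun n => abs_le.1 ((habs n).trans_le (ht.mem_Icc n).2),
    fun n hn => by simpa [supportSign, hn] using (ht.mem_Icc n).1,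
    fun n hn => by simpa [supportSign, hn] using (ht.mem_Icc n).1, hsum,
    by simp_rw [habs, ht.sum_eq, le_refl], hfourier⟩

theorem exists_small_spectral_support_of_forall_pos (φ : StrongDual ℝ (ℝ × (Fin k → ℂ)))
    {Ex : Finset (ZMod p)} (hφ : ∀ n ∉ Ex, 0 < φ (supportSign g n • charVec a n)) :
    ∃ h : ZMod p → ℝ,
      (∀ b : ZMod p, zmodFourier (fun n => (h n : ℂ)) b ≠ 0 →
        b = 0 ∨ ∃ i : Fin k, b = a i ∨ b = -(a i)) ∧
      ∀ n ∉ Ex, (g n ≠ 0 → 0 < h n) ∧ (g n = 0 → h n < 0) := by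
  refine ⟨fun n => φ (charVec a n), fun b hb => ?_, fun n hn => ?_⟩
  · by_contra! hba
    exact hb (zmodFourier_map_charVec_eq_zero (φ : (ℝ × (Fin k → ℂ)) →ₗ[ℝ] ℝ) hba.1 hba.2)
  · have := hφ n hn
    by_cases hgn : g n = 0 <;> simp_all [supportSign]

end Balanced

theorem vanishing_or_small_spectral_support_balanced_function_general
    (p : ℕ) [Fact p.Prime] (g : ZMod p → ℝ)
    (k : ℕ) (a : Fin k → ZMod p) (E : ℕ) :
    (∃ h : ZMod p → ℝ,
      (∀ n, h n ∈ Set.Icc (-1 : ℝ) 1) ∧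
      (∀ n, g n ≠ 0 → 0 ≤ h n) ∧
      (∀ n, g n = 0 → h n ≤ 0) ∧
      (∑ n : ZMod p, h n = 0) ∧
      ((E : ℝ) ≤ ∑ n : ZMod p, |h n|) ∧
      (∀ i : Fin k, zmodFourier (fun n => (h n : ℂ)) (a i) = 0)) ∨
    (∃ h : ZMod p → ℝ,
      (∀ b : ZMod p, zmodFourier (fun n => (h n : ℂ)) b ≠ 0 →
        b = 0 ∨ ∃ i : Fin k, b = a i ∨ b = -(a i)) ∧
      (∃ Ex : Finset (ZMod p), Ex.card ≤ (2 * k + 2) * E ∧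
        ∀ n ∉ Ex, (g n ≠ 0 → 0 < h n) ∧ (g n = 0 → h n < 0))) := by
  rcases exists_isVanishingWeight_or_forall_pos (fun n => supportSign g n • charVec a n) E with
    ⟨U, t, -, ht⟩ | ⟨φ, Ex, hEx, hφ⟩
  · exact .inl (exists_balanced_of_isVanishingWeight ht)
  · obtain ⟨h, hspec, hsign⟩ := exists_small_spectral_support_of_forall_pos φ hφ
    rw [finrank_real_prod_fin_complex] at hEx
    exact .inr ⟨h, hspec, Ex, hEx, hsign⟩

/-- Either there is a vanishing generalized balanced function for the support of `g`
with ℓ¹-norm at least `E` whose Fourier transform vanishes at `a_1, …, a_k`, or there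
is a generalized balanced function (with at most `(2k+2)E` exceptions) whose Fourier
transform is supported in `{0} ∪ {a_1,…,a_k} ∪ {−a_1,…,−a_k}`. -/
theorem vanishing_or_small_spectral_support_balanced_function
    (p : ℕ) [Fact p.Prime] (g : ZMod p → ℝ) (hg : ∀ n, g n ∈ Set.Icc (0 : ℝ) 1)
    (k : ℕ) (a : Fin k → ZMod p) (ha : ∀ i, a i ≠ 0) (E : ℕ) :
    (∃ h : ZMod p → ℝ,
      (∀ n, h n ∈ Set.Icc (-1 : ℝ) 1) ∧
      (∀ n, g n ≠ 0 → 0 ≤ h n) ∧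
      (∀ n, g n = 0 → h n ≤ 0) ∧
      (∑ n : ZMod p, h n = 0) ∧
      ((E : ℝ) ≤ ∑ n : ZMod p, |h n|) ∧
      (∀ i : Fin k, zmodFourier (fun n => (h n : ℂ)) (a i) = 0)) ∨
    (∃ h : ZMod p → ℝ,
      (∀ b : ZMod p, zmodFourier (fun n => (h n : ℂ)) b ≠ 0 →
        b = 0 ∨ ∃ i : Fin k, b = a i ∨ b = -(a i)) ∧
      (∃ Ex : Finset (ZMod p), Ex.card ≤ (2 * k + 2) * E ∧
        ∀ n ∉ Ex, (g n ≠ 0 → 0 < h n) ∧ (g n = 0 → h n < 0))) :=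
  vanishing_or_small_spectral_support_balanced_function_general p g k a E
end

section
/- Suppose M is an m × n real matrix with n > m. Then one of the following holds: either there exists a non-negative vector v = (v(1),…,v(n)) ∈ ℝ_{≥0}^n with Σ_j v(j) = 1, having at most m+1 non-zero entries, and satisfying M v = 0; or there exists a vector w ∈ ℝ^m such that every entry of the row vector w M is strictly positive. -/
/-!
If `0` lies in the convex hull of the columns of `M`, Carathéodory's theorem writes it as a convex
combination of at most `m + 1` affinely independent columns, and these weights give `v`.
Otherwise `0` is strictly separated from that compact convex set by a linear functional, which is
a row vector `w` with `w M` positive.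
-/

open Set Function Module
open scoped Matrix

theorem Function.Injective.sum_extend_zero_smul {κ ι R M : Type*} [Fintype κ] [Fintype ι]
    [Semiring R] [AddCommMonoid M] [Module R M] {g : κ → ι} (hg : Injective g) (w : κ → R)
    (f : ι → M) : ∑ i, extend g w 0 i • f i = ∑ k, w k • f (g k) := by
  refine (Fintype.sum_of_injective g hg _ _ (fun i hi => ?_) fun k => ?_).symm
  · rw [extend_apply' _ _ _ fun ⟨k, hk⟩ => hi ⟨k, hk⟩, Pi.zero_apply, zero_smul]
  · rw [hg.extend_apply]

theorem exists_mem_stdSimplex_ncard_support_le_of_mem_convexHull {𝕜 ι E : Type*} [Field 𝕜]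
    [LinearOrder 𝕜] [IsStrictOrderedRing 𝕜] [Fintype ι] [AddCommGroup E] [Module 𝕜 E]
    [FiniteDimensional 𝕜 E] {f : ι → E} {x : E} (hx : x ∈ convexHull 𝕜 (range f)) :
    ∃ v ∈ stdSimplex 𝕜 ι, (support v).ncard ≤ finrank 𝕜 E + 1 ∧ ∑ i, v i • f i = x := by
  obtain ⟨κ, _, z, w, hzf, hz, hw₀, hw₁, hwx⟩ := eq_pos_convex_span_of_mem_convexHull hx
  choose g hg using fun k => hzf (mem_range_self k)
  have hg_inj : Injective g := fun k l hkl => hz.injective (by rw [← hg k, ← hg l, hkl])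
  refine ⟨extend g w (0 : ι → 𝕜), ⟨fun i => ?_, ?_⟩, ?_, ?_⟩
  · rcases em (∃ k, g k = i) with ⟨k, rfl⟩ | hi
    · rw [hg_inj.extend_apply]
      exact (hw₀ k).le
    · rw [extend_apply' _ _ _ hi]
      exact le_rfl
  · simpa [hw₁] using hg_inj.sum_extend_zero_smul w (fun _ => (1 : 𝕜))
  · calc (support (extend g w 0)).ncard ≤ (g '' support w).ncard :=
          ncard_le_ncard support_extend_zero_subset
      _ ≤ Nat.card κ := (ncard_image_le (toFinite _)).trans (ncard_le_card _)
      _ ≤ finrank 𝕜 (vectorSpan 𝕜 (range z)) + 1 := by simpa using hz.card_le_finrank_succ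
      _ ≤ finrank 𝕜 E + 1 := by gcongr; exact Submodule.finrank_le _
  · simp_rw [hg_inj.sum_extend_zero_smul, hg, hwx]

theorem exists_dual_lt_of_notMem_convexHull {ι E : Type*} [Finite ι] [TopologicalSpace E]
    [AddCommGroup E] [Module ℝ E] [IsTopologicalAddGroup E] [ContinuousSMul ℝ E]
    [LocallyConvexSpace ℝ E] [T2Space E] {f : ι → E} {x : E}
    (hx : x ∉ convexHull ℝ (range f)) : ∃ φ : E →L[ℝ] ℝ, ∀ i, φ x < φ (f i) := by
  obtain ⟨φ, u, hφx, hφf⟩ := geometric_hahn_banach_point_closed (convex_convexHull ℝ _)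
    ((finite_range f).isCompact_convexHull ℝ).isClosed hx
  exact ⟨φ, fun i => hφx.trans (hφf _ (subset_convexHull ℝ _ (mem_range_self i)))⟩

theorem dotProduct_map_single_one {R ι F : Type*} [CommSemiring R] [Fintype ι] [DecidableEq ι]
    [FunLike F (ι → R) R] [LinearMapClass F R (ι → R) R] (φ : F) (x : ι → R) :
    (fun i => φ (Pi.single i 1)) ⬝ᵥ x = φ x := by
  conv_rhs => rw [← Finset.univ_sum_single x]
  simp only [dotProduct, map_sum]
  refine Finset.sum_congr rfl fun i _ => ?_
  rw [mul_comm, ← smul_eq_mul, ← map_smul, ← Pi.single_smul, smul_eq_mul, mul_one]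

theorem farkas_type_alternative_general (m n : ℕ) (M : Matrix (Fin m) (Fin n) ℝ) :
    (∃ v : Fin n → ℝ, (∀ j, 0 ≤ v j) ∧ (∑ j, v j = 1) ∧
      ({j : Fin n | v j ≠ 0}).ncard ≤ m + 1 ∧ M.mulVec v = 0) ∨
    (∃ w : Fin m → ℝ, ∀ j, 0 < Matrix.vecMul w M j) := by
  by_cases h0 : (0 : Fin m → ℝ) ∈ convexHull ℝ (range Mᵀ)
  · obtain ⟨v, ⟨hv₀, hv₁⟩, hcard, hMv⟩ :=
      exists_mem_stdSimplex_ncard_support_le_of_mem_convexHull h0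
    refine .inl ⟨v, hv₀, hv₁, by rwa [finrank_fin_fun] at hcard, ?_⟩
    rw [Matrix.mulVec_eq_sum]
    simpa using hMv
  · obtain ⟨φ, hφ⟩ := exists_dual_lt_of_notMem_convexHull h0
    refine .inr ⟨fun i => φ (Pi.single i 1), fun j => ?_⟩
    change 0 < _ ⬝ᵥ Mᵀ j
    simpa [dotProduct_map_single_one] using hφ j

/-- For an `m × n` real matrix `M` with `n > m`: either there is a probability vector
`v` with at most `m + 1` nonzero entries and `M v = 0`, or there is a row vector `w`
such that every entry of `w M` is strictly positive. -/
theorem farkas_type_alternative (m n : ℕ) (hn : n > m) (M : Matrix (Fin m) (Fin n) ℝ) :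
    (∃ v : Fin n → ℝ, (∀ j, 0 ≤ v j) ∧ (∑ j, v j = 1) ∧
      ({j : Fin n | v j ≠ 0}).ncard ≤ m + 1 ∧ M.mulVec v = 0) ∨
    (∃ w : Fin m → ℝ, ∀ j, 0 < Matrix.vecMul w M j) :=
  farkas_type_alternative_general m n M
end
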